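/- arXiv:2501.15249 — 2 statements merged into one kernel-verified Lean document; each statement's English description precedes it below -/
import Mathlib

section
/- Let G be a finite directed graph whose edges are labeled with functions ℤ → ℤ of the form 'subtract 1', 'add 1', or 'identity' acting on a non-negative integer counter, such that every cycle of G contains strictly more 'subtract 1' edges than 'add 1' edges. Then every walk in G along which the counter remains non-negative is finite; i.e., there is no infinite walk keeping the counter ≥ 0 at every step. -/
/-!
Since `V` is finite, some vertex `v` is visited infinitely often. Between two consecutive visits
the walk traverses a cycle, whose total label is negative, so the counter values at the visits
of `v` form a strictly decreasing sequence of integers, which cannot stay non-negative.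
-/

lemma eq_add_sum_range_of_succ_eq_add {G : Type*} [AddCommGroup G] {c f : ℕ → G}
    (hc : ∀ n, c (n + 1) = c n + f n) (m d : ℕ) :
    c (m + d) = c m + ∑ i ∈ Finset.range d, f (m + i) := by
  rw [Finset.eq_sum_range_sub (fun i => c (m + i)) d]
  simp [← add_assoc, hc]

lemma not_bddBelow_range_of_lt_of_map_eq {V β : Type*} [Finite V] [Preorder β] [PredOrder β]
    [IsPredArchimedean β] (w : ℕ → V) (c : ℕ → β)
    (h : ∀ n m, n < m → w n = w m → c m < c n) : ¬ BddBelow (Set.range c) := by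
  obtain ⟨v, hv⟩ := Finite.exists_infinite_fiber w
  rw [Set.infinite_coe_iff] at hv
  set visit := Nat.nth (· ∈ w ⁻¹' {v})
  have hvisit : ∀ k, w (visit k) = v := Nat.nth_mem_of_infinite hv
  have hanti : StrictAnti (c ∘ visit) := fun k l hkl =>
    h _ _ (Nat.nth_strictMono hv hkl) ((hvisit k).trans (hvisit l).symm)
  exact fun hbdd => hanti.not_bddBelow_range_of_isPredArchimedean
    (hbdd.mono (Set.range_comp_subset_range visit c))

theorem no_infinite_nonneg_walk_general (V : Type) [Fintype V]
    (E : V → V → Prop) (label : V → V → ℤ)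
    (hcyc : ∀ n : ℕ, 0 < n → ∀ w : ℕ → V,
      (∀ i < n, E (w i) (w (i + 1))) → w n = w 0 →
      (∑ i ∈ Finset.range n, label (w i) (w (i + 1))) < 0) :
    ¬ ∃ (w : ℕ → V) (c : ℕ → ℤ),
      (∀ n, E (w n) (w (n + 1))) ∧
      (∀ n, c (n + 1) = c n + label (w n) (w (n + 1))) ∧
      (∀ n, 0 ≤ c n) := by
  rintro ⟨w, c, hE, hc, hpos⟩
  have hdecr : ∀ n m, n < m → w n = w m → c m < c n := by
    intro n m hnm hw
    obtain ⟨d, rfl⟩ := Nat.exists_eq_add_of_lt hnm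
    have hcycle := hcyc (d + 1) d.succ_pos (fun i => w (n + i)) (fun i _ => hE (n + i))
      (by simpa [← add_assoc] using hw.symm)
    have hstep := eq_add_sum_range_of_succ_eq_add hc n (d + 1)
    simp only [← add_assoc] at hcycle hstep ⊢
    omega
  exact not_bddBelow_range_of_lt_of_map_eq w c hdecr ⟨0, Set.forall_mem_range.2 hpos⟩

/-- In a finite directed graph whose edges are labeled by -1, 0, or +1,
if every cycle has strictly more `-1` edges than `+1` edges (i.e., negative
total label), then there is no infinite walk keeping a counter, updated
by the labels, non-negative at every step. -/
theorem no_infinite_nonneg_walk (V : Type) [Fintype V]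
    (E : V → V → Prop) (label : V → V → ℤ)
    (hlab : ∀ u v, E u v → label u v = -1 ∨ label u v = 0 ∨ label u v = 1)
    (hcyc : ∀ n : ℕ, 0 < n → ∀ w : ℕ → V,
      (∀ i < n, E (w i) (w (i + 1))) → w n = w 0 →
      (∑ i ∈ Finset.range n, label (w i) (w (i + 1))) < 0) :
    ¬ ∃ (w : ℕ → V) (c : ℕ → ℤ),
      (∀ n, E (w n) (w (n + 1))) ∧
      (∀ n, c (n + 1) = c n + label (w n) (w (n + 1))) ∧
      (∀ n, 0 ≤ c n) :=
  no_infinite_nonneg_walk_general V E label hcyc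
end

section
/- Let G = (V, E) be a finite directed graph with a distinguished initial vertex v₀ and a set of goal vertices Goal, representing the state transitions of a deterministic policy (each non-goal vertex in the policy's domain has exactly one outgoing edge). Suppose (i) G is 'closed': every reachable non-goal vertex has an outgoing edge; (ii) G is 'terminating': there is no infinite path from v₀; and (iii) some goal vertex is reachable along the unique maximal path from v₀. Then the unique maximal path from v₀ is finite and ends in a goal vertex. Conversely, if the unique maximal path from every initial vertex is finite and goal-reaching, then conditions (i)–(iii) hold restricted to reachable vertices. -/
/-! Execution is deterministic, so all vertices reachable from `v₀` lie on a single path. Execution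
stops at goal vertices, so a reachable goal vertex ends that path, and every reachable vertex
before it has a successor: closedness follows from reaching a goal. -/

namespace Relation.ReflTransGen

variable {α : Type*} {r : α → α → Prop} {a b c : α}

theorem of_right_unique_of_terminal (hr : Relator.RightUnique r) (hab : ReflTransGen r a b)
    (hac : ReflTransGen r a c) (hb : ∀ x, ¬ r b x) : ReflTransGen r c b := by
  rcases total_of_right_unique hr hab hac with hbc | hcb
  · rcases hbc.cases_head with rfl | ⟨x, hbx, _⟩
    · exact refl
    · exact absurd hbx (hb x)
  · exact hcb

end Relation.ReflTransGen

theorem policy_solution_characterization_general {V : Type}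
    (succ : V → Option V) (v₀ : V) (Goal : Set V) :
    (let step : V → V → Prop := fun u v => u ∉ Goal ∧ succ u = some v
    -- (i) closed, (ii) terminating, (iii) a goal vertex is reachable
    ((∀ v, Relation.ReflTransGen step v₀ v → v ∉ Goal → ∃ u, succ v = some u) ∧
     (¬ ∃ w : ℕ → V, w 0 = v₀ ∧ ∀ n, step (w n) (w (n + 1))) ∧
     (∃ v, Relation.ReflTransGen step v₀ v ∧ v ∈ Goal))
    ↔
    -- the unique maximal path from v₀ is finite and ends in a goal vertex
    ((∃ v, Relation.ReflTransGen step v₀ v ∧ v ∈ Goal) ∧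
     (¬ ∃ w : ℕ → V, w 0 = v₀ ∧ ∀ n, step (w n) (w (n + 1))))) := by
  intro step
  have step_rightUnique : Relator.RightUnique step :=
    fun _ _ _ ⟨_, hb⟩ ⟨_, hc⟩ => Option.some.inj (hb.symm.trans hc)
  refine ⟨fun ⟨_, hterm, hgoal⟩ => ⟨hgoal, hterm⟩,
    fun ⟨⟨g, hg, hgG⟩, hterm⟩ => ⟨?closed, hterm, g, hg, hgG⟩⟩
  intro v hv hvG
  have hvg : Relation.ReflTransGen step v g :=
    hg.of_right_unique_of_terminal step_rightUnique hv fun _ hgx => hgx.1 hgG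
  rcases hvg.cases_head with rfl | ⟨u, ⟨_, hvu⟩, _⟩
  · exact absurd hgG hvG
  · exact ⟨u, hvu⟩

/-- Characterization of solutions for a deterministic policy graph: with
execution steps `step u v ↔ u ∉ Goal ∧ succ u = some v` (execution stops at
goal vertices), the policy is closed, terminating and reaches a goal vertex
if and only if the unique maximal path from `v₀` is finite and ends in a goal
vertex. -/
theorem policy_solution_characterization {V : Type} [Fintype V]
    (succ : V → Option V) (v₀ : V) (Goal : Set V) :
    (let step : V → V → Prop := fun u v => u ∉ Goal ∧ succ u = some v
    -- (i) closed, (ii) terminating, (iii) a goal vertex is reachable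
    ((∀ v, Relation.ReflTransGen step v₀ v → v ∉ Goal → ∃ u, succ v = some u) ∧
     (¬ ∃ w : ℕ → V, w 0 = v₀ ∧ ∀ n, step (w n) (w (n + 1))) ∧
     (∃ v, Relation.ReflTransGen step v₀ v ∧ v ∈ Goal))
    ↔
    -- the unique maximal path from v₀ is finite and ends in a goal vertex
    ((∃ v, Relation.ReflTransGen step v₀ v ∧ v ∈ Goal) ∧
     (¬ ∃ w : ℕ → V, w 0 = v₀ ∧ ∀ n, step (w n) (w (n + 1))))) :=
  policy_solution_characterization_general succ v₀ Goal
end
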